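/- arXiv:2508.15443 — 3 statements merged into one kernel-verified Lean document; each statement's English description precedes it below -/
import Mathlib

section
/- Let p be a prime, and let f = g/h be a rational function with coefficients in ℚ_p, where h is a polynomial all of whose roots in the algebraic closure of ℚ_p have absolute value strictly greater than r > 0, and h(0) ≠ 0. Then the coefficients a_k of the formal power series expansion of 1/h at 0 satisfy |a_k|_p ≤ |a_0|_p / R^k, where R > r is the minimum absolute value of a root of h. In particular the power series of 1/h converges on the ball {x ∈ ℚ_p : |x|_p ≤ r}. -/
/-!
Call a power series `f` dominated by its constant coefficient at radius `R` when
`‖fᵢ‖ ≤ ‖f₀‖ / Rⁱ` for all `i`. Over an ultrametric field this property is stable under products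
(each term `fᵢ gⱼ` of a coefficient of `f g` is bounded by `‖f₀ g₀‖ / Rⁱ⁺ʲ`) and under inversion
(strong induction on the recursion `g_k = -f₀⁻¹ ∑_{i ≥ 1} fᵢ g_{k-i}` for `g = f⁻¹`).
Over the algebraic closure `h = c ∏ (X - z)`, and each factor `X - z` with `R ≤ ‖z‖` has the
property, hence so do `h` and `1/h`. The resulting bound `‖a_k‖ ≤ ‖a₀‖ / R^k` dominates
`∑ a_k x^k` by a geometric series for `‖x‖ ≤ r < R`.
-/

open Finset

theorem IsUltrametricDist.of_norm_algebraMap {F L : Type*} [NormedField F] [IsUltrametricDist F]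
    [NormedDivisionRing L] [Algebra F L] (hF : ∀ a : F, ‖algebraMap F L a‖ = ‖a‖) :
    IsUltrametricDist L := by
  have hnat := (isUltrametricDist_iff_forall_norm_natCast_le_one (R := F)).1 inferInstance
  rw [isUltrametricDist_iff_forall_norm_natCast_le_one]
  exact fun n => map_natCast (algebraMap F L) n ▸ (hF n).trans_le (hnat n)

theorem summable_mul_pow_of_norm_le_div_pow {F : Type*} [NormedField F] [CompleteSpace F]
    {a : ℕ → F} {C R : ℝ} (ha : ∀ k, ‖a k‖ ≤ C / R ^ k) {x : F} (hx : ‖x‖ < R) :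
    Summable fun k => a k * x ^ k := by
  have hR : 0 < R := (norm_nonneg x).trans_lt hx
  refine Summable.of_norm_bounded
    ((summable_geometric_of_lt_one (by positivity) ((div_lt_one hR).2 hx)).mul_left C)
    fun k => ?_
  calc ‖a k * x ^ k‖ = ‖a k‖ * ‖x‖ ^ k := by rw [norm_mul, norm_pow]
    _ ≤ C / R ^ k * ‖x‖ ^ k := mul_le_mul_of_nonneg_right (ha k) (by positivity)
    _ = C * (‖x‖ / R) ^ k := by rw [div_pow]; ring

theorem norm_mul_le_div_pow_add {K : Type*} [NormedDivisionRing K] {a b : K} {A B R : ℝ} {i j : ℕ}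
    (ha : ‖a‖ ≤ A / R ^ i) (hb : ‖b‖ ≤ B / R ^ j) : ‖a * b‖ ≤ A * B / R ^ (i + j) := by
  rw [norm_mul, pow_add, ← div_mul_div_comm]
  exact mul_le_mul ha hb (norm_nonneg b) ((norm_nonneg a).trans ha)

namespace PowerSeries

variable {K : Type*} [NormedField K] {R : ℝ}

def HasDominantConstCoeff (R : ℝ) (f : K⟦X⟧) : Prop :=
  ∀ i, ‖coeff i f‖ ≤ ‖coeff 0 f‖ / R ^ i

namespace HasDominantConstCoeff

theorem X_sub_C (hR : 0 < R) {z : K} (hz : R ≤ ‖z‖) : HasDominantConstCoeff R (X - C z) := by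
  rintro (_ | _ | i)
  · simp
  · simpa [coeff_X, coeff_C] using (one_le_div hR).2 hz
  · simpa [coeff_X, coeff_C] using by positivity

theorem C (hR : 0 ≤ R) (c : K) : HasDominantConstCoeff R (C c) := by
  rintro (_ | i)
  · simp
  · simpa [coeff_C] using by positivity

theorem one (hR : 0 ≤ R) : HasDominantConstCoeff R (1 : K⟦X⟧) := by
  simpa using C hR (1 : K)

variable [IsUltrametricDist K]

theorem mul (hR : 0 ≤ R) {f g : K⟦X⟧} (hf : HasDominantConstCoeff R f)
    (hg : HasDominantConstCoeff R g) : HasDominantConstCoeff R (f * g) := by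
  intro k
  rw [coeff_mul, coeff_zero_eq_constantCoeff_apply, map_mul, norm_mul,
    ← coeff_zero_eq_constantCoeff_apply, ← coeff_zero_eq_constantCoeff_apply]
  refine IsUltrametricDist.norm_sum_le_of_forall_le_of_nonneg (by positivity) fun x hx => ?_
  rw [← mem_antidiagonal.1 hx]
  exact norm_mul_le_div_pow_add (hf x.1) (hg x.2)

theorem multiset_prod (hR : 0 ≤ R) {s : Multiset K⟦X⟧} (hs : ∀ f ∈ s, HasDominantConstCoeff R f) :
    HasDominantConstCoeff R s.prod :=
  Multiset.prod_induction _ s (fun _ _ => mul hR) (one hR) hs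

theorem inv (hR : 0 ≤ R) {f : K⟦X⟧} (hf : HasDominantConstCoeff R f) :
    HasDominantConstCoeff R f⁻¹ := by
  intro k
  induction k using Nat.strong_induction_on with
  | _ k ih =>
  rcases k.eq_zero_or_pos with rfl | hk
  · simp
  have hsum : ‖∑ x ∈ antidiagonal k, if x.2 < k then coeff x.1 f * coeff x.2 f⁻¹ else 0‖ ≤
      ‖coeff 0 f‖ * ‖coeff 0 f⁻¹‖ / R ^ k := by
    refine IsUltrametricDist.norm_sum_le_of_forall_le_of_nonneg (by positivity) fun x hx => ?_
    split_ifs with hx2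
    · rw [← mem_antidiagonal.1 hx]
      exact norm_mul_le_div_pow_add (hf x.1) (ih x.2 hx2)
    · simpa using by positivity
  rw [coeff_inv, if_neg hk.ne', norm_mul, norm_neg, norm_inv, ← coeff_zero_eq_constantCoeff_apply]
  calc ‖coeff 0 f‖⁻¹ * ‖_‖ ≤ ‖coeff 0 f‖⁻¹ * (‖coeff 0 f‖ * ‖coeff 0 f⁻¹‖ / R ^ k) := by gcongr
    _ = ‖coeff 0 f‖⁻¹ * ‖coeff 0 f‖ * (‖coeff 0 f⁻¹‖ / R ^ k) := by ring
    _ ≤ ‖coeff 0 f⁻¹‖ / R ^ k := mul_le_of_le_one_left (by positivity) inv_mul_le_one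

end HasDominantConstCoeff

end PowerSeries

namespace Polynomial

open PowerSeries (HasDominantConstCoeff)

theorem hasDominantConstCoeff_of_splits {K : Type*} [NormedField K] [IsUltrametricDist K] {R : ℝ}
    (hR : 0 < R) {q : K[X]} (hq : q.Splits) (hroots : ∀ z ∈ q.roots, R ≤ ‖z‖) :
    HasDominantConstCoeff R (q : PowerSeries K) := by
  rw [hq.eq_prod_roots, coe_mul, coe_C, ← coeToPowerSeries.ringHom_apply, map_multiset_prod,
    Multiset.map_map]
  refine (HasDominantConstCoeff.C hR.le _).mul hR.le
    (HasDominantConstCoeff.multiset_prod hR.le fun f hf => ?_)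
  obtain ⟨z, hz, rfl⟩ := Multiset.mem_map.1 hf
  simpa using HasDominantConstCoeff.X_sub_C hR (hroots z hz)

theorem hasDominantConstCoeff_map_iff {F K : Type*} [NormedField F] [NormedField K]
    {f : F →+* K} (hf : ∀ a, ‖f a‖ = ‖a‖) {R : ℝ} (q : F[X]) :
    HasDominantConstCoeff R (q.map f : PowerSeries K) ↔
      HasDominantConstCoeff R (q : PowerSeries F) := by
  simp only [HasDominantConstCoeff, coeff_coe, coeff_map, hf]

end Polynomial

theorem padic_inv_poly_series_converges_general (p : ℕ) [hp : Fact p.Prime]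
    (K : Type*) [NormedField K] [Algebra ℚ_[p] K] [IsAlgClosed K]
    (hK : ∀ a : ℚ_[p], ‖algebraMap ℚ_[p] K a‖ = ‖a‖)
    (h : Polynomial ℚ_[p])
    (r R : ℝ) (hr : 0 < r) (hrR : r < R)
    (hroots : ∀ z : K, (Polynomial.aeval z) h = 0 → R ≤ ‖z‖)
    (a : ℕ → ℚ_[p])
    (ha : ∀ k : ℕ, a k = PowerSeries.coeff (R := ℚ_[p]) k (↑h : PowerSeries ℚ_[p])⁻¹) :
    (∀ k : ℕ, ‖a k‖ ≤ ‖a 0‖ / R ^ k) ∧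
      ∀ x : ℚ_[p], ‖x‖ ≤ r → Summable (fun k : ℕ => a k * x ^ k) := by
  have hR : 0 < R := hr.trans hrR
  have := IsUltrametricDist.of_norm_algebraMap hK
  have hroots' : ∀ z ∈ (h.map (algebraMap ℚ_[p] K)).roots, R ≤ ‖z‖ := fun z hz =>
    hroots z (by simpa [Polynomial.aeval_def, Polynomial.eval_map] using
      (Polynomial.mem_roots'.1 hz).2)
  have hdom : PowerSeries.HasDominantConstCoeff R (h : PowerSeries ℚ_[p]) :=
    (Polynomial.hasDominantConstCoeff_map_iff hK h).1
      (Polynomial.hasDominantConstCoeff_of_splits hR (IsAlgClosed.splits _) hroots')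
  have hbound : ∀ k, ‖a k‖ ≤ ‖a 0‖ / R ^ k := fun k => by
    simpa only [ha] using hdom.inv hR.le k
  exact ⟨hbound, fun x hx => summable_mul_pow_of_norm_le_div_pow hbound (hx.trans_lt hrR)⟩

/-- If all roots (in a normed algebraically closed extension of `ℚ_p`) of a polynomial `h`
with `h 0 ≠ 0` have absolute value at least `R > r > 0`, then the coefficients `a k` of the
power series expansion of `1/h` at `0` satisfy `‖a k‖ ≤ ‖a 0‖ / R ^ k`, and the power series
of `1/h` converges on the closed ball of radius `r`. -/
theorem padic_inv_poly_series_converges (p : ℕ) [hp : Fact p.Prime]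
    (K : Type*) [NormedField K] [Algebra ℚ_[p] K] [IsAlgClosed K]
    (hK : ∀ a : ℚ_[p], ‖algebraMap ℚ_[p] K a‖ = ‖a‖)
    (h : Polynomial ℚ_[p]) (h0 : h.coeff 0 ≠ 0)
    (r R : ℝ) (hr : 0 < r) (hrR : r < R)
    (hroots : ∀ z : K, (Polynomial.aeval z) h = 0 → R ≤ ‖z‖)
    (a : ℕ → ℚ_[p])
    (ha : ∀ k : ℕ, a k = PowerSeries.coeff (R := ℚ_[p]) k (↑h : PowerSeries ℚ_[p])⁻¹) :
    (∀ k : ℕ, ‖a k‖ ≤ ‖a 0‖ / R ^ k) ∧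
      ∀ x : ℚ_[p], ‖x‖ ≤ r → Summable (fun k : ℕ => a k * x ^ k) :=
  padic_inv_poly_series_converges_general p (hp := hp) K hK h r R hr hrR hroots a ha
end

section
/- Let p be a prime and let f: ℚ_p → ℚ_p be the digit-spreading map f(∑ a_n p^n) = ∑ a_n p^{2n} (with f(0) = 0). Then f is differentiable everywhere with derivative 0: for every x ∈ ℚ_p, lim_{h→0} (f(x+h) - f(x))/h = 0. -/
open Filter IsUltrametricDist Finset

section helpers

variable {p : ℕ} [hp : Fact p.Prime]

private lemma pds_norm_term (a : ℤ → ℕ) (e : ℤ → ℤ) (n : ℤ) :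
    ‖(a n : ℚ_[p]) * (p : ℚ_[p]) ^ (e n)‖ ≤ (p : ℝ) ^ (-(e n)) := by
  rw [norm_mul, Padic.norm_p_zpow]
  have h1 : ‖((a n : ℤ) : ℚ_[p])‖ ≤ 1 := Padic.norm_int_le_one _
  push_cast at h1
  calc ‖(a n : ℚ_[p])‖ * (p : ℝ) ^ (-(e n)) ≤ 1 * (p : ℝ) ^ (-(e n)) := by
        have : (0:ℝ) ≤ (p : ℝ) ^ (-(e n)) := zpow_nonneg (by positivity) _
        nlinarith [norm_nonneg (a n : ℚ_[p])]
    _ = (p : ℝ) ^ (-(e n)) := one_mul _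

private lemma pds_summable (a : ℤ → ℕ) (v : ℤ) (hav : ∀ n < v, a n = 0)
    (e : ℤ → ℤ) (he : ∀ n : ℤ, 0 ≤ n → n ≤ e n) :
    Summable (fun n : ℤ => (a n : ℚ_[p]) * (p : ℚ_[p]) ^ (e n)) := by
  apply NonarchimedeanAddGroup.summable_of_tendsto_cofinite_zero
  rw [Metric.tendsto_nhds]
  intro ε hε
  rw [Filter.eventually_cofinite]
  have hp1 : (1:ℝ) < (p : ℝ) := by exact_mod_cast hp.out.one_lt
  obtain ⟨k, hk⟩ : ∃ k : ℕ, ((p:ℝ))⁻¹ ^ k < ε := by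
    apply exists_pow_lt_of_lt_one hε
    rw [inv_lt_one_iff₀]; right; exact hp1
  apply Set.Finite.subset (Set.finite_Icc v (max (k:ℤ) 0))
  intro n hn
  simp only [Set.mem_setOf_eq, not_lt] at hn
  simp only [Set.mem_Icc]
  constructor
  · by_contra h
    push_neg at h
    rw [hav n h] at hn
    simp at hn
    linarith
  · by_contra h
    push_neg at h
    have hn0 : 0 ≤ n := le_of_lt (lt_of_le_of_lt (le_max_right _ _) h)
    have hkn : (k:ℤ) ≤ n := le_of_lt (lt_of_le_of_lt (le_max_left _ _) h)
    have hb : ‖(a n : ℚ_[p]) * (p : ℚ_[p]) ^ (e n)‖ ≤ (p : ℝ) ^ (-(e n)) :=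
      pds_norm_term a e n
    have h2 : (p : ℝ) ^ (-(e n)) ≤ (p : ℝ) ^ (-(k:ℤ)) := by
      apply zpow_le_zpow_right₀ (le_of_lt hp1)
      have := he n hn0
      omega
    have h3 : (p : ℝ) ^ (-(k:ℤ)) = ((p:ℝ))⁻¹ ^ k := by
      rw [zpow_neg, ← zpow_natCast, ← inv_zpow]
    rw [dist_zero_right] at hn
    rw [h3] at h2
    linarith

private lemma pds_tail (a : ℤ → ℕ) (v : ℤ) (hav : ∀ n < v, a n = 0)
    (e : ℤ → ℤ) (he : ∀ n : ℤ, 0 ≤ n → n ≤ e n) (hem : Monotone e) (m : ℤ) :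
    ‖(∑' n : ℤ, (a n : ℚ_[p]) * (p : ℚ_[p]) ^ (e n)) -
      ∑ n ∈ Finset.Icc v (m - 1), (a n : ℚ_[p]) * (p : ℚ_[p]) ^ (e n)‖
      ≤ (p : ℝ) ^ (-(e m)) := by
  have hsum := pds_summable (p := p) a v hav e he
  have h := Summable.sum_add_tsum_compl (s := Finset.Icc v (m-1)) hsum
  rw [← h, add_sub_cancel_left]
  apply norm_tsum_le_of_forall_le_of_nonneg (zpow_nonneg (by positivity) _)
  rintro ⟨n, hn⟩
  simp only [Finset.coe_Icc, Set.mem_compl_iff, Set.mem_Icc, not_and_or, not_le] at hn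
  rcases hn with h1 | h2
  · rw [hav n h1]
    simp only [Nat.cast_zero, zero_mul, norm_zero]
    positivity
  · refine (pds_norm_term a e n).trans ?_
    apply zpow_le_zpow_right₀ (by exact_mod_cast hp.out.one_lt.le)
    have : m ≤ n := by omega
    exact neg_le_neg (hem this)

private lemma pds_nat_digits_lt (d : ℕ) (a : ℕ → ℕ) (ha : ∀ j, a j < p) :
    (∑ j ∈ Finset.range d, a j * p ^ j) < p ^ d := by
  induction d with
  | zero => simp
  | succ d ih =>
    rw [Finset.sum_range_succ, pow_succ]
    have h1 : a d * p ^ d + p ^ d ≤ p ^ d * p := by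
      have : (a d + 1) * p ^ d ≤ p * p ^ d :=
        Nat.mul_le_mul_right _ (ha d)
      calc a d * p ^ d + p ^ d = (a d + 1) * p ^ d := by ring
        _ ≤ p * p ^ d := this
        _ = p ^ d * p := by ring
    omega

private lemma pds_nat_digits_inj (d : ℕ) (a b : ℕ → ℕ) (ha : ∀ j, a j < p) (hb : ∀ j, b j < p)
    (hab : (∑ j ∈ Finset.range d, a j * p ^ j) = ∑ j ∈ Finset.range d, b j * p ^ j) :
    ∀ j < d, a j = b j := by
  induction d generalizing a b with
  | zero => intro j hj; omega
  | succ d ih =>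
    have key : ∀ c : ℕ → ℕ, (∑ j ∈ Finset.range (d+1), c j * p ^ j)
        = c 0 + p * ∑ j ∈ Finset.range d, c (j+1) * p ^ j := by
      intro c
      rw [Finset.sum_range_succ', pow_zero, mul_one, Finset.mul_sum, add_comm]
      congr 1
      apply Finset.sum_congr rfl
      intro j _
      ring
    rw [key a, key b] at hab
    have hpp : 0 < p := hp.out.pos
    have h0 : a 0 = b 0 := by
      have h1 := congrArg (· % p) hab
      simpa [Nat.add_mul_mod_self_left, Nat.mod_eq_of_lt (ha 0), Nat.mod_eq_of_lt (hb 0),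
        Nat.add_comm] using h1
    have hAB : (∑ j ∈ Finset.range d, a (j+1) * p ^ j)
        = ∑ j ∈ Finset.range d, b (j+1) * p ^ j := by
      have : p * (∑ j ∈ Finset.range d, a (j+1) * p ^ j)
          = p * ∑ j ∈ Finset.range d, b (j+1) * p ^ j := by omega
      exact Nat.eq_of_mul_eq_mul_left hpp this
    intro j hj
    match j with
    | 0 => exact h0
    | j + 1 =>
      exact ih (fun j => a (j+1)) (fun j => b (j+1)) (fun j => ha _) (fun j => hb _) hAB j
        (by omega)

private lemma pds_reindex (a : ℤ → ℕ) (w : ℤ) (d : ℕ) :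
    ∑ n ∈ Finset.Icc w (w + d - 1), (a n : ℚ_[p]) * (p : ℚ_[p]) ^ n
      = (p : ℚ_[p]) ^ w * ((∑ j ∈ Finset.range d, a (w + j) * p ^ j : ℕ) : ℚ_[p]) := by
  push_cast
  rw [Finset.mul_sum]
  refine Finset.sum_nbij' (fun n => (n - w).toNat) (fun j => w + j) ?_ ?_ ?_ ?_ ?_
  · intro n hn
    simp only [Finset.mem_Icc] at hn
    simp only [Finset.mem_range]
    omega
  · intro j hj
    simp only [Finset.mem_range] at hj
    simp only [Finset.mem_Icc]
    omega
  · intro n hn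
    simp only [Finset.mem_Icc] at hn
    show w + (((n - w).toNat : ℕ) : ℤ) = n
    omega
  · intro j hj
    simp only [Finset.mem_range] at hj
    show ((w + (j:ℤ)) - w).toNat = j
    omega
  · intro n hn
    simp only [Finset.mem_Icc] at hn
    have he : (((n - w).toNat : ℤ)) = n - w := by omega
    have hpne : (p : ℚ_[p]) ≠ 0 := by exact_mod_cast hp.out.ne_zero
    have hzz : (p:ℚ_[p]) ^ n = (p:ℚ_[p]) ^ w * (p:ℚ_[p]) ^ (n - w) := by
      rw [← zpow_add₀ hpne]
      congr 1
      ring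
    beta_reduce
    rw [he, show w + (n - w) = n by ring]
    rw [← zpow_natCast (p : ℚ_[p]) ((n - w).toNat), he, hzz]
    ring

private lemma pds_trunc_eq (a b : ℤ → ℕ) (ha : ∀ n, a n < p) (hb : ∀ n, b n < p)
    (w m : ℤ) (haw : ∀ n < w, a n = 0) (hbw : ∀ n < w, b n = 0)
    (h : ‖(∑ n ∈ Finset.Icc w (m-1), (a n : ℚ_[p]) * (p : ℚ_[p]) ^ n) -
          ∑ n ∈ Finset.Icc w (m-1), (b n : ℚ_[p]) * (p : ℚ_[p]) ^ n‖ ≤ (p : ℝ) ^ (-m)) :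
    ∀ n < m, a n = b n := by
  intro n hn
  rcases lt_or_ge n w with h' | h'
  · rw [haw n h', hbw n h']
  have hwm : w < m := lt_of_le_of_lt h' hn
  set d : ℕ := (m - w).toNat with hd
  have hdm : w + (d:ℤ) - 1 = m - 1 := by omega
  set Na : ℕ := ∑ j ∈ Finset.range d, a (w + j) * p ^ j with hNa
  set Nb : ℕ := ∑ j ∈ Finset.range d, b (w + j) * p ^ j with hNb
  rw [show (m - 1) = w + (d:ℤ) - 1 from hdm.symm] at h
  rw [pds_reindex a w d, pds_reindex b w d, ← hNa, ← hNb, ← mul_sub, norm_mul,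
    Padic.norm_p_zpow] at h
  have hp1 : (1:ℝ) < (p : ℝ) := by exact_mod_cast hp.out.one_lt
  have hppos : (0:ℝ) < (p:ℝ) ^ (-w) := zpow_pos (by positivity) _
  have hz : ‖((Na : ℚ_[p]) - Nb)‖ ≤ (p:ℝ) ^ (-(d:ℤ)) := by
    have h2 : (p:ℝ) ^ (-w) * ‖((Na : ℚ_[p]) - Nb)‖ ≤ (p:ℝ) ^ (-m) := h
    have h3 : ‖((Na : ℚ_[p]) - Nb)‖ ≤ (p:ℝ) ^ (-m) / (p:ℝ) ^ (-w) := by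
      rw [le_div_iff₀ hppos]; linarith [h2]
    refine h3.trans (le_of_eq ?_)
    rw [← zpow_sub₀ (by positivity)]
    congr 1
    omega
  have hdvd : ((p:ℤ) ^ d) ∣ ((Na : ℤ) - (Nb : ℤ)) := by
    rw [← Padic.norm_int_le_pow_iff_dvd]
    push_cast
    exact hz
  have hNad : Na < p ^ d := pds_nat_digits_lt d (fun j => a (w + j)) (fun j => ha _)
  have hNbd : Nb < p ^ d := pds_nat_digits_lt d (fun j => b (w + j)) (fun j => hb _)
  have hzero : (Na : ℤ) - (Nb : ℤ) = 0 := by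
    apply Int.eq_zero_of_abs_lt_dvd hdvd
    have h1 : ((Na : ℤ)) < (p:ℤ) ^ d := by exact_mod_cast hNad
    have h2 : ((Nb : ℤ)) < (p:ℤ) ^ d := by exact_mod_cast hNbd
    rw [abs_lt]
    constructor <;> omega
  have hNe : Na = Nb := by omega
  have := pds_nat_digits_inj d (fun j => a (w + j)) (fun j => b (w + j))
    (fun j => ha _) (fun j => hb _) hNe ((n - w).toNat) (by omega)
  have he : w + (((n - w).toNat : ℕ) : ℤ) = n := by omega
  rwa [he] at this

end helpers

/-- The digit-spreading map `f(∑ aₙ pⁿ) = ∑ aₙ p^(2n)` (with `f 0 = 0`) on `ℚ_p` is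
differentiable everywhere with derivative `0`. The map is specified through the `p`-adic digit expansions: for every `x ≠ 0`
with expansion `x = ∑_{n ≥ v_p(x)} aₙ pⁿ` (digits `aₙ ∈ {0, …, p-1}`, leading digit nonzero),
we have `f x = ∑_{n ≥ v_p(x)} aₙ p^(2n)`. -/
theorem padic_digit_spreading_deriv_zero (p : ℕ) [hp : Fact p.Prime]
    (f : ℚ_[p] → ℚ_[p]) (hf0 : f 0 = 0)
    (hf : ∀ x : ℚ_[p], x ≠ 0 → ∃ a : ℤ → ℕ,
      (∀ n, a n < p) ∧ (∀ n, n < x.valuation → a n = 0) ∧ a x.valuation ≠ 0 ∧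
      x = ∑' n : ℤ, (a n : ℚ_[p]) * (p : ℚ_[p]) ^ n ∧
      f x = ∑' n : ℤ, (a n : ℚ_[p]) * (p : ℚ_[p]) ^ (2 * n)) :
    ∀ x : ℚ_[p], HasDerivAt f 0 x := by
  have hp1 : (1:ℝ) < (p : ℝ) := by exact_mod_cast hp.out.one_lt
  have he2 : ∀ n : ℤ, 0 ≤ n → n ≤ 2 * n := fun n hn => by omega
  have hmono2 : Monotone (fun n : ℤ => 2 * n) := fun a b hab => by simp; omega
  have hsq : ∀ m : ℤ, (p:ℝ) ^ (-(2*m)) = ((p:ℝ) ^ (-m))^2 := by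
    intro m
    rw [← zpow_natCast ((p:ℝ) ^ (-m)) 2, ← zpow_mul]
    congr 1
    ring
  -- single point bound : ‖f x‖ ≤ ‖x‖ ^ 2 for x ≠ 0
  have hpt : ∀ x : ℚ_[p], x ≠ 0 → ‖f x‖ ≤ ‖x‖^2 := by
    intro x hx
    obtain ⟨a, ha, hav, -, -, hfx⟩ := hf x hx
    have h := pds_tail (p := p) a x.valuation hav (fun n => 2 * n) he2 hmono2 x.valuation
    rw [Finset.Icc_eq_empty (by omega), Finset.sum_empty, sub_zero] at h
    rw [hfx]
    refine h.trans (le_of_eq ?_)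
    rw [hsq, Padic.norm_eq_zpow_neg_valuation hx]
  -- key estimate
  have key : ∀ x y : ℚ_[p], ‖f x - f y‖ ≤ ‖x - y‖^2 := by
    intro x y
    rcases eq_or_ne x y with rfl | hxy
    · simp
    rcases eq_or_ne y 0 with rfl | hy
    · simpa [hf0] using hpt x (by simpa using hxy)
    rcases eq_or_ne x 0 with rfl | hx
    · rw [norm_sub_rev, show (0:ℚ_[p]) - y = -(y - 0) by ring, norm_neg]
      simpa [hf0] using hpt y hy
    obtain ⟨a, ha, hav, -, hxa, hfa⟩ := hf x hx
    obtain ⟨b, hb, hbv, -, hyb, hfb⟩ := hf y hy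
    set w : ℤ := min x.valuation y.valuation with hw
    have haw : ∀ n < w, a n = 0 := fun n hn => hav n (by omega)
    have hbw : ∀ n < w, b n = 0 := fun n hn => hbv n (by omega)
    set m : ℤ := (x - y).valuation with hm
    have hnxy : ‖x - y‖ = (p:ℝ) ^ (-m) := Padic.norm_eq_zpow_neg_valuation (sub_ne_zero.mpr hxy)
    set A : ℚ_[p] := ∑ n ∈ Finset.Icc w (m-1), (a n : ℚ_[p]) * (p : ℚ_[p]) ^ n with hA
    set B : ℚ_[p] := ∑ n ∈ Finset.Icc w (m-1), (b n : ℚ_[p]) * (p : ℚ_[p]) ^ n with hB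
    have hxA : ‖x - A‖ ≤ (p:ℝ) ^ (-m) := by
      rw [hxa]
      exact pds_tail a w haw id (fun n _ => le_refl _) monotone_id m
    have hyB : ‖y - B‖ ≤ (p:ℝ) ^ (-m) := by
      rw [hyb]
      exact pds_tail b w hbw id (fun n _ => le_refl _) monotone_id m
    have hAB : ‖A - B‖ ≤ (p:ℝ) ^ (-m) := by
      have h1 : A - B = (A - x) + ((x - y) + (y - B)) := by ring
      rw [h1]
      refine (Padic.nonarchimedean _ _).trans (max_le ?_ ?_)
      · rw [norm_sub_rev]; exact hxA
      · refine (Padic.nonarchimedean _ _).trans (max_le ?_ hyB)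
        rw [← hnxy]
    have hdig : ∀ n < m, a n = b n := pds_trunc_eq a b ha hb w m haw hbw hAB
    set A2 : ℚ_[p] := ∑ n ∈ Finset.Icc w (m-1), (a n : ℚ_[p]) * (p : ℚ_[p]) ^ (2*n) with hA2
    set B2 : ℚ_[p] := ∑ n ∈ Finset.Icc w (m-1), (b n : ℚ_[p]) * (p : ℚ_[p]) ^ (2*n) with hB2
    have hA2B2 : A2 = B2 := by
      apply Finset.sum_congr rfl
      intro n hn
      simp only [Finset.mem_Icc] at hn
      rw [hdig n (by omega)]
    have hfxA2 : ‖f x - A2‖ ≤ (p:ℝ) ^ (-(2*m)) := by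
      rw [hfa]
      exact pds_tail a w haw (fun n => 2*n) he2 hmono2 m
    have hfyB2 : ‖f y - B2‖ ≤ (p:ℝ) ^ (-(2*m)) := by
      rw [hfb]
      exact pds_tail b w hbw (fun n => 2*n) he2 hmono2 m
    have h1 : f x - f y = (f x - A2) + (B2 - f y) := by rw [hA2B2]; ring
    rw [h1]
    refine (Padic.nonarchimedean _ _).trans ?_
    rw [hnxy, ← hsq]
    refine max_le hfxA2 ?_
    rw [norm_sub_rev]
    exact hfyB2
  intro x
  rw [hasDerivAt_iff_isLittleO]
  simp only [smul_zero, sub_zero]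
  rw [Asymptotics.isLittleO_iff]
  intro c hc
  rw [Metric.eventually_nhds_iff]
  refine ⟨c, hc, fun {y} hy => ?_⟩
  have h1 : ‖f y - f x‖ ≤ ‖y - x‖ ^ 2 := key y x
  have h2 : ‖y - x‖ < c := by rwa [dist_eq_norm] at hy
  calc ‖f y - f x‖ ≤ ‖y - x‖ ^ 2 := h1
    _ = ‖y - x‖ * ‖y - x‖ := sq (‖y - x‖) ▸ rfl
    _ ≤ c * ‖y - x‖ := mul_le_mul_of_nonneg_right h2.le (norm_nonneg _)
end

section
/- Let p be a prime, let r > 0, and let (a_k)_{k≥0} be a sequence in ℚ_p satisfying |a_0|_p ≤ r and, for each k ≥ 0, |(k+1) a_{k+1}|_p ≤ max over certain tuples of |c · a_{j_1} ⋯ a_{j_s}|_p where |c|_p ≤ C_s with r^{s-1} C_s ≤ 1 for all s ≥ 2, C_0 = C_1 = 0, and j_1 + ... + j_s ≤ k. If the induction hypothesis |a_j|_p ≤ r/|j!|_p holds for all j ≤ k, then |a_{k+1}|_p ≤ r/|(k+1)!|_p. -/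
set_option maxHeartbeats 1000000


/-- The key inductive estimate in the proof of the multivariable `p`-adic initial value
problem lemma: if `‖a 0‖ ≤ r`, `‖(k+1) * a (k+1)‖` is bounded by `‖c * a j₁ * ⋯ * a jₛ‖` for
some tuple with `‖c‖ ≤ C s`, `j₁ + ⋯ + jₛ ≤ k`, where `C 0 = C 1 = 0` and `r^(s-1) * C s ≤ 1`
for `s ≥ 2`, and `‖a j‖ ≤ r / ‖j!‖` for all `j ≤ k`, then `‖a (k+1)‖ ≤ r / ‖(k+1)!‖`. -/
theorem padic_ivp_inductive_estimate (p : ℕ) [hp : Fact p.Prime]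
    (r : ℝ) (hr : 0 < r) (C : ℕ → ℝ)
    (hC0 : C 0 = 0) (hC1 : C 1 = 0)
    (hCs : ∀ s : ℕ, 2 ≤ s → r ^ (s - 1) * C s ≤ 1)
    (a : ℕ → ℚ_[p]) (ha0 : ‖a 0‖ ≤ r) (k : ℕ)
    (hbound : ∃ (s : ℕ) (j : Fin s → ℕ) (c : ℚ_[p]),
      ‖c‖ ≤ C s ∧ (∑ i, j i) ≤ k ∧
      ‖((k : ℚ_[p]) + 1) * a (k + 1)‖ ≤ ‖c * ∏ i, a (j i)‖)
    (hind : ∀ j : ℕ, j ≤ k → ‖a j‖ ≤ r / ‖((j.factorial : ℚ_[p]))‖) :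
    ‖a (k + 1)‖ ≤ r / ‖(((k + 1).factorial : ℚ_[p]))‖ := by
  obtain ⟨s, j, c, hc, hsum, hle⟩ := hbound
  have hk1 : ((k : ℚ_[p]) + 1) ≠ 0 := Nat.cast_add_one_ne_zero k
  have hk1pos : 0 < ‖((k : ℚ_[p]) + 1)‖ := norm_pos_iff.mpr hk1
  have hkfne : ((k.factorial : ℚ_[p])) ≠ 0 := by
    exact_mod_cast Nat.cast_ne_zero.mpr k.factorial_ne_zero
  have hkfpos : 0 < ‖((k.factorial : ℚ_[p]))‖ := norm_pos_iff.mpr hkfne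
  -- key estimate
  have key : ‖((k : ℚ_[p]) + 1) * a (k + 1)‖ ≤ r / ‖((k.factorial : ℚ_[p]))‖ := by
    rcases Nat.lt_or_ge s 2 with hs | hs
    · have hc0 : c = 0 := by
        have : ‖c‖ ≤ 0 := by interval_cases s <;> simpa [hC0, hC1] using hc
        exact norm_le_zero_iff.mp this
      refine le_trans hle ?_
      rw [hc0]
      simp
      positivity
    · have hCnn : 0 ≤ C s := le_trans (norm_nonneg c) hc
      -- each j i ≤ k
      have hji : ∀ i : Fin s, j i ≤ k := fun i =>
        le_trans (Finset.single_le_sum (fun i _ => Nat.zero_le _) (Finset.mem_univ i)) hsum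
      -- product of factorials divides k!
      have hdvd : (∏ i, (j i).factorial) ∣ k.factorial :=
        dvd_trans (Nat.prod_factorial_dvd_factorial_sum _ _) (Nat.factorial_dvd_factorial hsum)
      obtain ⟨d, hd⟩ := hdvd
      have hnormprodfac : ‖((k.factorial : ℚ_[p]))‖ ≤ ∏ i, ‖(((j i).factorial : ℚ_[p]))‖ := by
        have h1 : ((k.factorial : ℚ_[p])) = (∏ i, (((j i).factorial : ℚ_[p]))) * (d : ℚ_[p]) := by
          rw [hd]; push_cast; ring
        rw [h1, norm_mul, norm_prod]
        have hdle : ‖(d : ℚ_[p])‖ ≤ 1 := by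
          have := Padic.norm_int_le_one (p := p) (d : ℤ)
          simpa using this
        calc (∏ i, ‖(((j i).factorial : ℚ_[p]))‖) * ‖(d : ℚ_[p])‖
            ≤ (∏ i, ‖(((j i).factorial : ℚ_[p]))‖) * 1 :=
              mul_le_mul_of_nonneg_left hdle
                (Finset.prod_nonneg fun i _ => norm_nonneg _)
          _ = _ := by ring
      have hprodpos : 0 < ∏ i, ‖(((j i).factorial : ℚ_[p]))‖ := by
        apply Finset.prod_pos
        intro i _
        exact norm_pos_iff.mpr (by exact_mod_cast Nat.cast_ne_zero.mpr (j i).factorial_ne_zero)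
      refine le_trans hle ?_
      rw [norm_mul, norm_prod]
      have hstep1 : ∏ i, ‖a (j i)‖ ≤ ∏ i, (r / ‖(((j i).factorial : ℚ_[p]))‖) := by
        apply Finset.prod_le_prod (fun i _ => norm_nonneg _)
        intro i _
        exact hind _ (hji i)
      have hstep2 : (∏ i, (r / ‖(((j i).factorial : ℚ_[p]))‖))
          = r ^ s / ∏ i, ‖(((j i).factorial : ℚ_[p]))‖ := by
        rw [Finset.prod_div_distrib, Finset.prod_const, Finset.card_univ, Fintype.card_fin]
      calc ‖c‖ * ∏ i, ‖a (j i)‖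
          ≤ C s * (r ^ s / ∏ i, ‖(((j i).factorial : ℚ_[p]))‖) := by
            rw [← hstep2]
            exact mul_le_mul hc hstep1
              (Finset.prod_nonneg fun i _ => norm_nonneg _) hCnn
        _ ≤ C s * (r ^ s / ‖((k.factorial : ℚ_[p]))‖) := by
            apply mul_le_mul_of_nonneg_left _ hCnn
            apply div_le_div_of_nonneg_left (by positivity) hkfpos hnormprodfac
        _ = (r ^ (s - 1) * C s) * r / ‖((k.factorial : ℚ_[p]))‖ := by
            have : r ^ s = r ^ (s - 1) * r := by
              conv_lhs => rw [show s = (s - 1) + 1 by omega]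
              rw [pow_succ]
            rw [this]; ring
        _ ≤ 1 * r / ‖((k.factorial : ℚ_[p]))‖ := by
            apply div_le_div_of_nonneg_right _ hkfpos.le
            exact mul_le_mul_of_nonneg_right (hCs s hs) hr.le
        _ = r / ‖((k.factorial : ℚ_[p]))‖ := by ring
  -- conclude
  have h1 : ‖a (k + 1)‖ = ‖((k : ℚ_[p]) + 1) * a (k + 1)‖ / ‖((k : ℚ_[p]) + 1)‖ := by
    rw [norm_mul]; field_simp
  have h2 : ‖(((k + 1).factorial : ℚ_[p]))‖ = ‖((k : ℚ_[p]) + 1)‖ * ‖((k.factorial : ℚ_[p]))‖ := by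
    rw [Nat.factorial_succ]
    push_cast
    rw [norm_mul]
  rw [h1, h2]
  rw [div_le_div_iff₀ hk1pos (by positivity)]
  calc ‖((k : ℚ_[p]) + 1) * a (k + 1)‖ * (‖((k : ℚ_[p]) + 1)‖ * ‖((k.factorial : ℚ_[p]))‖)
      ≤ (r / ‖((k.factorial : ℚ_[p]))‖) * (‖((k : ℚ_[p]) + 1)‖ * ‖((k.factorial : ℚ_[p]))‖) :=
        mul_le_mul_of_nonneg_right key (by positivity)
    _ = r * ‖((k : ℚ_[p]) + 1)‖ := by field_simp
end
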